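/- arXiv:2312.09845 — 7 statements merged into one kernel-verified Lean document; each statement's English description precedes it below -/
import Mathlib

section
/- Let σ: ℕ → ℝ be a positive sequence converging to 0, and let Π, Δ: ℕ → ℝ be positive sequences. Then the sequence g_n = σ_n / (σ_n² + Δ_n/Π_n) is bounded if and only if there exist c > 0 and N such that for all n ≥ N, Δ_n ≥ c · σ_n · Π_n. -/
/-! Writing `q = Δ / P`, the bound `σ / (σ² + q) ≤ C` amounts to `σ ≤ C (σ² + q)`.
Since `σ → 0`, eventually `C σ² ≤ σ / 2`, so the bound forces `q ≥ σ / (2C)`;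
conversely `q ≥ c σ` gives `σ / (σ² + q) ≤ 1 / c`,
and the finitely many remaining terms are bounded anyway. -/

open Filter Set Topology

theorem div_sq_add_le_inv_of_mul_le {s q c : ℝ} (hs : 0 < s) (hc : 0 < c) (hcs : c * s ≤ q) :
    s / (s ^ 2 + q) ≤ c⁻¹ := by
  rw [div_le_iff₀ (by nlinarith), inv_mul_eq_div, le_div_iff₀ hc]
  nlinarith

theorem mul_le_of_div_sq_add_le {s q C : ℝ} (hs : 0 < s) (hq : 0 ≤ q) (hC : 0 < C)
    (hsC : s / (s ^ 2 + q) ≤ C) (hs_small : s ≤ (2 * C)⁻¹) : (2 * C)⁻¹ * s ≤ q := by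
  rw [div_le_iff₀ (by positivity)] at hsC
  rw [← one_div, le_div_iff₀ (by positivity)] at hs_small
  rw [inv_mul_le_iff₀ (by positivity)]
  nlinarith [mul_le_mul_of_nonneg_left hs_small hs.le]

theorem bddAbove_range_div_sq_add_iff {ι : Type*} {s q : ι → ℝ} (hs : ∀ i, 0 < s i)
    (hs0 : Tendsto s cofinite (𝓝 0)) (hq : ∀ i, 0 ≤ q i) :
    BddAbove (range fun i ↦ s i / (s i ^ 2 + q i)) ↔
      ∃ c, 0 < c ∧ ∀ᶠ i in cofinite, c * s i ≤ q i := by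
  constructor
  · rintro ⟨C, hC⟩
    rw [mem_upperBounds, forall_mem_range] at hC
    have hC' : 0 < max C 1 := by positivity
    refine ⟨(2 * max C 1)⁻¹, by positivity, ?_⟩
    filter_upwards [hs0.eventually (ge_mem_nhds (inv_pos.2 (mul_pos two_pos hC')))] with i hi
    exact mul_le_of_div_sq_add_le (hs i) (hq i) hC' ((hC i).trans (le_max_left _ _)) hi
  · rintro ⟨c, hc, hcs⟩
    refine IsBoundedUnder.bddAbove_range_of_cofinite
      (isBoundedUnder_of_eventually_le (a := c⁻¹) ?_)
    filter_upwards [hcs] with i hi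
    exact div_sq_add_le_inv_of_mul_le (hs i) hc hi

/-- Continuity criterion for the MSE-optimal spectral reconstruction operator:
the filter coefficients `g n = σ n / (σ n ^ 2 + Δ n / P n)` are bounded iff
`Δ n ≥ c * σ n * P n` for some `c > 0` and all sufficiently large `n`. -/
theorem stmt0 (σ P Δ : ℕ → ℝ)
    (hσ : ∀ n, 0 < σ n) (hσ0 : Filter.Tendsto σ Filter.atTop (nhds 0))
    (hP : ∀ n, 0 < P n) (hΔ : ∀ n, 0 < Δ n) :
    (∃ C : ℝ, ∀ n, σ n / (σ n ^ 2 + Δ n / P n) ≤ C) ↔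
      (∃ c : ℝ, 0 < c ∧ ∃ N : ℕ, ∀ n ≥ N, Δ n ≥ c * σ n * P n) := by
  have key := bddAbove_range_div_sq_add_iff hσ (Nat.cofinite_eq_atTop ▸ hσ0)
    (fun n ↦ (div_pos (hΔ n) (hP n)).le)
  simpa only [bddAbove_def, forall_mem_range, Nat.cofinite_eq_atTop, eventually_atTop,
    le_div_iff₀ (hP _)] using key
end

section
/- Let σ, Π: ℕ → ℝ be positive sequences with σ_n → 0 and ∑ Π_n < ∞, let x: ℕ → ℝ satisfy ∑ x_n² < ∞. For δ > 0 and a noise sequence Δ: ℕ → ℝ with 0 ≤ Δ_n ≤ δ² for all n, define E(Δ, δ) = ∑_n [ δ⁴/(Π_n σ_n² + δ²)² · x_n² + Π_n σ_n² Δ_n/(Π_n σ_n² + δ²)² · Π_n ]. Then sup over all such Δ of E(Δ, δ) tends to 0 as δ → 0. -/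
/-!
Writing `a_n = Π_n σ_n²`, each summand is nondecreasing in `Δ_n`, so the worst test noise is the
white training noise `Δ_n = δ²`. In that case the `n`-th summand is bounded by `x_n² + Π_n`, a
summable sequence independent of `δ`, and tends to `0` as `δ → 0` because `a_n > 0`; dominated
convergence for series then sends the worst-case error to `0`.
-/

open Filter Topology

/-- The `n`-th summand of `E`, with `a = Π_n σ_n²`, `y = x_n²`, `p = Π_n` and test noise
variance `d = Δ_n`. -/
noncomputable def componentError (a y p δ d : ℝ) : ℝ :=
  δ ^ 4 / (a + δ ^ 2) ^ 2 * y + a * d / (a + δ ^ 2) ^ 2 * p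

section ComponentError

variable {a y p δ d : ℝ}

lemma componentError_nonneg (ha : 0 ≤ a) (hy : 0 ≤ y) (hp : 0 ≤ p) (hd : 0 ≤ d) :
    0 ≤ componentError a y p δ d := by
  unfold componentError
  positivity

lemma componentError_le_of_le_sq (ha : 0 ≤ a) (hp : 0 ≤ p) (hd : d ≤ δ ^ 2) :
    componentError a y p δ d ≤ componentError a y p δ (δ ^ 2) := by
  unfold componentError
  gcongr

lemma componentError_sq_le (ha : 0 ≤ a) (hy : 0 ≤ y) (hp : 0 ≤ p) :
    componentError a y p δ (δ ^ 2) ≤ y + p := by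
  have hbias : δ ^ 4 / (a + δ ^ 2) ^ 2 ≤ 1 :=
    div_le_one_of_le₀ (by nlinarith [sq_nonneg δ]) (sq_nonneg _)
  have hnoise : a * δ ^ 2 / (a + δ ^ 2) ^ 2 ≤ 1 :=
    div_le_one_of_le₀ (by nlinarith [sq_nonneg δ, mul_nonneg ha (sq_nonneg δ)]) (sq_nonneg _)
  unfold componentError
  gcongr <;> exact mul_le_of_le_one_left ‹_› ‹_›

lemma tendsto_componentError_sq (ha : 0 < a) :
    Tendsto (fun δ => componentError a y p δ (δ ^ 2)) (𝓝 0) (𝓝 0) := by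
  have hcont : ContinuousAt (fun δ => componentError a y p δ (δ ^ 2)) 0 := by
    unfold componentError
    fun_prop (disch := simp [ha.ne'])
  simpa [componentError] using hcont.tendsto

end ComponentError

lemma tendsto_tsum_componentError_sq {a y p : ℕ → ℝ} (ha : ∀ n, 0 < a n) (hy : ∀ n, 0 ≤ y n)
    (hp : ∀ n, 0 ≤ p n) (hys : Summable y) (hps : Summable p) :
    Tendsto (fun δ => ∑' n, componentError (a n) (y n) (p n) δ (δ ^ 2)) (𝓝 0) (𝓝 0) := by
  have hdom : ∀ δ n, ‖componentError (a n) (y n) (p n) δ (δ ^ 2)‖ ≤ y n + p n := fun δ n => by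
    rw [Real.norm_of_nonneg (componentError_nonneg (ha n).le (hy n) (hp n) (sq_nonneg δ))]
    exact componentError_sq_le (ha n).le (hy n) (hp n)
  simpa using tendsto_tsum_of_dominated_convergence (hys.add hps)
    (fun n => tendsto_componentError_sq (ha n)) (Eventually.of_forall hdom)

theorem stmt3_general (σ P x : ℕ → ℝ)
    (hσ : ∀ n, 0 < σ n)
    (hP : ∀ n, 0 < P n) (hPsum : Summable P)
    (hx : Summable fun n => x n ^ 2) :
    ∀ ε > (0 : ℝ), ∃ δ₀ > (0 : ℝ), ∀ δ : ℝ, 0 < δ → δ ≤ δ₀ →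
      ∀ Δ : ℕ → ℝ, (∀ n, 0 ≤ Δ n ∧ Δ n ≤ δ ^ 2) →
        (∑' n, (δ ^ 4 / (P n * σ n ^ 2 + δ ^ 2) ^ 2 * x n ^ 2 +
            P n * σ n ^ 2 * Δ n / (P n * σ n ^ 2 + δ ^ 2) ^ 2 * P n)) ≤ ε := by
  intro ε hε
  have ha n : 0 < P n * σ n ^ 2 := by have := hσ n; have := hP n; positivity
  have hy n : 0 ≤ x n ^ 2 := sq_nonneg _
  have hp n : 0 ≤ P n := (hP n).le
  obtain ⟨r, hr, hsmall⟩ := Metric.eventually_nhds_iff.mp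
    ((tendsto_tsum_componentError_sq ha hy hp hx hPsum).eventually (ge_mem_nhds hε))
  refine ⟨r / 2, half_pos hr, fun δ hδ hδr Δ hΔ => ?_⟩
  have hworst : Summable fun n => componentError (P n * σ n ^ 2) (x n ^ 2) (P n) δ (δ ^ 2) :=
    (hx.add hPsum).of_nonneg_of_le (fun n => componentError_nonneg (ha n).le (hy n) (hp n)
      (sq_nonneg δ)) fun n => componentError_sq_le (ha n).le (hy n) (hp n)
  have hle n : componentError (P n * σ n ^ 2) (x n ^ 2) (P n) δ (Δ n) ≤
      componentError (P n * σ n ^ 2) (x n ^ 2) (P n) δ (δ ^ 2) :=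
    componentError_le_of_le_sq (ha n).le (hp n) (hΔ n).2
  calc _ = ∑' n, componentError (P n * σ n ^ 2) (x n ^ 2) (P n) δ (Δ n) := rfl
    _ ≤ ∑' n, componentError (P n * σ n ^ 2) (x n ^ 2) (P n) δ (δ ^ 2) :=
      (hworst.of_nonneg_of_le (fun n => componentError_nonneg (ha n).le (hy n) (hp n)
        (hΔ n).1) hle).tsum_le_tsum hle hworst
    _ ≤ ε := hsmall (by rw [Real.dist_0_eq_abs, abs_of_pos hδ]; linarith)

/-- Convergence of the MSE-optimal spectral regularizer trained with white noise of
level `δ`, uniformly over all test noise with coefficients bounded by `δ ^ 2`. -/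
theorem stmt3 (σ P x : ℕ → ℝ)
    (hσ : ∀ n, 0 < σ n) (hσ0 : Filter.Tendsto σ Filter.atTop (nhds 0))
    (hP : ∀ n, 0 < P n) (hPsum : Summable P)
    (hx : Summable fun n => x n ^ 2) :
    ∀ ε > (0 : ℝ), ∃ δ₀ > (0 : ℝ), ∀ δ : ℝ, 0 < δ → δ ≤ δ₀ →
      ∀ Δ : ℕ → ℝ, (∀ n, 0 ≤ Δ n ∧ Δ n ≤ δ ^ 2) →
        (∑' n, (δ ^ 4 / (P n * σ n ^ 2 + δ ^ 2) ^ 2 * x n ^ 2 +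
            P n * σ n ^ 2 * Δ n / (P n * σ n ^ 2 + δ ^ 2) ^ 2 * P n)) ≤ ε :=
  stmt3_general σ P x hσ hP hPsum hx
end

section
/- Let σ, Π: ℕ → ℝ be positive sequences with σ_n → 0 and ∑ Π_n < ∞, let x: ℕ → ℝ with ∑ x_n² < ∞. For noise sequences Δ: ℕ → ℝ≥0 with sup_n Δ_n ≤ δ², define E(Δ) = ∑_n [ Δ_n²/(Π_n σ_n² + Δ_n)² · x_n² + Π_n σ_n² Δ_n/(Π_n σ_n² + Δ_n)² · Π_n ]. Then sup over all such Δ of E(Δ) tends to 0 as δ → 0. -/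
/-!
Write `cₙ = Pₙ σₙ²` and `wₙ = Δₙ / (cₙ + Δₙ) ∈ [0, 1]`. The `n`-th summand is at most
`wₙ (xₙ² + Pₙ)`, and `cₙ wₙ ≤ Δₙ ≤ δ²`. So the summands are dominated by the summable sequence
`xₙ² + Pₙ`, which makes the tail small uniformly in `Δ`, and on the finitely many remaining
indices they are at most `δ² (xₙ² + Pₙ) / cₙ`.
-/

open Finset

theorem exists_pos_tsum_le_of_le_of_mul_le {a c : ℕ → ℝ} (ha : Summable a)
    (ha0 : ∀ n, 0 ≤ a n) (hc : ∀ n, 0 < c n)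
    {ε : ℝ} (hε : 0 < ε) :
    ∃ η > 0, ∀ f : ℕ → ℝ, (∀ n, 0 ≤ f n) → (∀ n, f n ≤ a n) → (∀ n, c n * f n ≤ η * a n) →
      ∑' n, f n ≤ ε := by
  obtain ⟨N, hN⟩ := (tendsto_order.1 (tendsto_sum_nat_add a)).2 (ε / 2) (half_pos hε)
    |>.exists_forall_of_atTop
  set M := ∑ n ∈ range N, a n / c n
  have hM : 0 ≤ M := sum_nonneg fun n _ => div_nonneg (ha0 n) (hc n).le
  refine ⟨ε / 2 / (M + 1), by positivity, fun f hf0 hfa hfc => ?_⟩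
  have hf : Summable f := ha.of_nonneg_of_le hf0 hfa
  have head : ∑ n ∈ range N, f n ≤ ε / 2 / (M + 1) * M := by
    rw [mul_sum]
    refine sum_le_sum fun n _ => ?_
    rw [← mul_div_assoc, le_div_iff₀ (hc n), mul_comm]
    exact hfc n
  have tail : ∑' k, f (k + N) ≤ ε / 2 :=
    ((summable_nat_add_iff N).2 hf).tsum_le_tsum (fun k => hfa (k + N))
      ((summable_nat_add_iff N).2 ha) |>.trans (hN N le_rfl).le
  have hMε : ε / 2 / (M + 1) * M ≤ ε / 2 := by
    rw [div_mul_eq_mul_div, div_le_iff₀ (by positivity)]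
    nlinarith
  rw [← hf.sum_add_tsum_nat_add N]
  linarith

theorem sq_div_mul_add_mul_div_mul_le {c d y p : ℝ} (hc : 0 < c) (hd : 0 ≤ d) (hy : 0 ≤ y)
    (hp : 0 ≤ p) :
    d ^ 2 / (c + d) ^ 2 * y + c * d / (c + d) ^ 2 * p ≤ d / (c + d) * (y + p) := by
  have hcd : 0 < c + d := by positivity
  rw [div_mul_eq_mul_div, div_mul_eq_mul_div, ← add_div, div_mul_eq_mul_div,
    div_le_div_iff₀ (by positivity) hcd]
  have : 0 ≤ (c * d * y + d ^ 2 * p) * (c + d) := by positivity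
  nlinarith

theorem sq_div_mul_add_mul_div_mul_le_add {c d y p : ℝ} (hc : 0 < c) (hd : 0 ≤ d)
    (hy : 0 ≤ y) (hp : 0 ≤ p) :
    d ^ 2 / (c + d) ^ 2 * y + c * d / (c + d) ^ 2 * p ≤ y + p := by
  refine (sq_div_mul_add_mul_div_mul_le hc hd hy hp).trans
    (mul_le_of_le_one_left (by positivity) ?_)
  exact div_le_one_of_le₀ (le_add_of_nonneg_left hc.le) (by positivity)

theorem mul_sq_div_mul_add_mul_div_mul_le {c d y p : ℝ} (hc : 0 < c) (hd : 0 ≤ d)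
    (hy : 0 ≤ y) (hp : 0 ≤ p) :
    c * (d ^ 2 / (c + d) ^ 2 * y + c * d / (c + d) ^ 2 * p) ≤ d * (y + p) := by
  have hweight : c * (d / (c + d)) ≤ d := by
    rw [mul_div_assoc', div_le_iff₀ (by positivity)]
    nlinarith
  calc c * (d ^ 2 / (c + d) ^ 2 * y + c * d / (c + d) ^ 2 * p)
      ≤ c * (d / (c + d) * (y + p)) :=
        mul_le_mul_of_nonneg_left (sq_div_mul_add_mul_div_mul_le hc hd hy hp) hc.le
    _ ≤ d * (y + p) := by
        rw [← mul_assoc]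
        exact mul_le_mul_of_nonneg_right hweight (by positivity)

theorem stmt4_general (σ P x : ℕ → ℝ)
    (hσ : ∀ n, 0 < σ n)
    (hP : ∀ n, 0 < P n) (hPsum : Summable P)
    (hx : Summable fun n => x n ^ 2) :
    ∀ ε > (0 : ℝ), ∃ δ₀ > (0 : ℝ), ∀ δ : ℝ, 0 < δ → δ ≤ δ₀ →
      ∀ Δ : ℕ → ℝ, (∀ n, 0 ≤ Δ n) → (∀ n, Δ n ≤ δ ^ 2) →
        (∑' n, (Δ n ^ 2 / (P n * σ n ^ 2 + Δ n) ^ 2 * x n ^ 2 +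
            P n * σ n ^ 2 * Δ n / (P n * σ n ^ 2 + Δ n) ^ 2 * P n)) ≤ ε := by
  intro ε hε
  have hc : ∀ n, 0 < P n * σ n ^ 2 := fun n => mul_pos (hP n) (pow_pos (hσ n) 2)
  have ha : ∀ n, 0 ≤ x n ^ 2 + P n := fun n => add_nonneg (sq_nonneg _) (hP n).le
  obtain ⟨η, hη, hsmall⟩ := exists_pos_tsum_le_of_le_of_mul_le (hx.add hPsum) ha hc hε
  refine ⟨√η, Real.sqrt_pos.2 hη, fun δ hδ hδη Δ hΔ0 hΔδ => hsmall _ (fun n => ?_) (fun n => ?_)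
    (fun n => ?_)⟩
  · have := hc n; have := hΔ0 n; have := hP n
    positivity
  · exact sq_div_mul_add_mul_div_mul_le_add (hc n) (hΔ0 n) (sq_nonneg _) (hP n).le
  · have hδ2 : δ ^ 2 ≤ η := (Real.le_sqrt hδ.le hη.le).1 hδη
    calc _ ≤ Δ n * (x n ^ 2 + P n) :=
          mul_sq_div_mul_add_mul_div_mul_le (hc n) (hΔ0 n) (sq_nonneg _) (hP n).le
      _ ≤ η * (x n ^ 2 + P n) := mul_le_mul_of_nonneg_right ((hΔδ n).trans hδ2) (ha n)

/-- Main convergence theorem for learned spectral regularization with matched training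
noise: the expected squared error tends to zero uniformly over all noise sequences
with level at most `δ`, as `δ → 0`. -/
theorem stmt4 (σ P x : ℕ → ℝ)
    (hσ : ∀ n, 0 < σ n) (hσ0 : Filter.Tendsto σ Filter.atTop (nhds 0))
    (hP : ∀ n, 0 < P n) (hPsum : Summable P)
    (hx : Summable fun n => x n ^ 2) :
    ∀ ε > (0 : ℝ), ∃ δ₀ > (0 : ℝ), ∀ δ : ℝ, 0 < δ → δ ≤ δ₀ →
      ∀ Δ : ℕ → ℝ, (∀ n, 0 ≤ Δ n) → (∀ n, Δ n ≤ δ ^ 2) →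
        (∑' n, (Δ n ^ 2 / (P n * σ n ^ 2 + Δ n) ^ 2 * x n ^ 2 +
            P n * σ n ^ 2 * Δ n / (P n * σ n ^ 2 + Δ n) ^ 2 * P n)) ≤ ε :=
  stmt4_general σ P x hσ hP hPsum hx
end

section
/- Let σ, Π, ΔTilde: ℕ → ℝ be positive sequences with σ_n → 0 and σ_n bounded. Then the sequence g_n = σ_n/(σ_n² + σ_n²·ΔTilde_n/Π_n) is bounded if and only if there exist c > 0 and N such that σ_n · ΔTilde_n ≥ c · Π_n for all n ≥ N. -/
/-! Since `g_n = Π_n / (σ_n (Π_n + ΔTilde_n))`, a bound `g_n ≤ C` says `Π_n ≤ C σ_n Π_n + C σ_n ΔTilde_n`.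
Once `σ_n → 0` makes `C σ_n ≤ 1/2`, the first term is absorbed and `σ_n ΔTilde_n ≥ Π_n / (2C)`.
Conversely `σ_n ΔTilde_n ≥ c Π_n` gives `g_n ≤ Π_n / (σ_n ΔTilde_n) ≤ 1/c` eventually, and the
finitely many remaining terms do not affect boundedness. -/

open Filter

lemma filterCoeff_eq {s p d : ℝ} (hs : s ≠ 0) (hp : p ≠ 0) :
    s / (s ^ 2 + s ^ 2 * d / p) = p / (s * (p + d)) := by
  field_simp

lemma inv_two_mul_mul_le_of_filterCoeff_le {s p d C : ℝ} (hs : 0 < s) (hp : 0 < p) (hd : 0 < d)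
    (hC : 0 < C) (hCs : C * s ≤ 1 / 2) (h : p / (s * (p + d)) ≤ C) :
    (2 * C)⁻¹ * p ≤ s * d := by
  have hbound : p ≤ C * s * p + C * (s * d) := by
    have := (div_le_iff₀ (by positivity)).mp h
    linarith
  rw [inv_mul_le_iff₀ (by positivity)]
  nlinarith

lemma filterCoeff_le_inv {s p d c : ℝ} (hs : 0 < s) (hp : 0 < p) (hd : 0 < d) (hc : 0 < c)
    (h : c * p ≤ s * d) : p / (s * (p + d)) ≤ c⁻¹ := by
  rw [div_le_iff₀ (by positivity), inv_mul_eq_div, le_div_iff₀ hc]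
  nlinarith [mul_pos hs hp]

theorem stmt6_general (σ P ΔT : ℕ → ℝ)
    (hσ : ∀ n, 0 < σ n) (hσ0 : Filter.Tendsto σ Filter.atTop (nhds 0))
    (hP : ∀ n, 0 < P n) (hΔ : ∀ n, 0 < ΔT n) :
    (∃ C : ℝ, ∀ n, σ n / (σ n ^ 2 + σ n ^ 2 * ΔT n / P n) ≤ C) ↔
      (∃ c : ℝ, 0 < c ∧ ∃ N : ℕ, ∀ n ≥ N, σ n * ΔT n ≥ c * P n) := by
  simp_rw [fun n => filterCoeff_eq (hσ n).ne' (hP n).ne']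
  constructor
  · rintro ⟨C, hC⟩
    have hC0 : 0 < C :=
      (div_pos (hP 0) (mul_pos (hσ 0) (add_pos (hP 0) (hΔ 0)))).trans_le (hC 0)
    obtain ⟨N, hN⟩ := eventually_atTop.mp
      (hσ0.eventually (gt_mem_nhds (by positivity : (0 : ℝ) < (2 * C)⁻¹)))
    refine ⟨(2 * C)⁻¹, by positivity, N, fun n hn => ?_⟩
    have hCσ : C * σ n ≤ 1 / 2 := by
      have := hN n hn
      rw [← one_div, lt_div_iff₀' (by positivity)] at this
      linarith
    exact inv_two_mul_mul_le_of_filterCoeff_le (hσ n) (hP n) (hΔ n) hC0 hCσ (hC n)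
  · rintro ⟨c, hc, N, hN⟩
    have hev : ∀ᶠ n in atTop, P n / (σ n * (P n + ΔT n)) ≤ c⁻¹ :=
      eventually_atTop.mpr ⟨N, fun n hn => filterCoeff_le_inv (hσ n) (hP n) (hΔ n) hc (hN n hn)⟩
    obtain ⟨C, hC⟩ := (isBoundedUnder_of_eventually_le hev).bddAbove_range
    exact ⟨C, fun n => hC ⟨n, rfl⟩⟩

/-- Continuity criterion for the post-processing reconstruction operator:
the filter coefficients `σ n / (σ n ^ 2 + σ n ^ 2 * ΔT n / P n)` are bounded iff
`σ n * ΔT n ≥ c * P n` eventually. -/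
theorem stmt6 (σ P ΔT : ℕ → ℝ)
    (hσ : ∀ n, 0 < σ n) (hσ0 : Filter.Tendsto σ Filter.atTop (nhds 0))
    (hσb : ∃ M : ℝ, ∀ n, σ n ≤ M)
    (hP : ∀ n, 0 < P n) (hΔ : ∀ n, 0 < ΔT n) :
    (∃ C : ℝ, ∀ n, σ n / (σ n ^ 2 + σ n ^ 2 * ΔT n / P n) ≤ C) ↔
      (∃ c : ℝ, 0 < c ∧ ∃ N : ℕ, ∀ n ≥ N, σ n * ΔT n ≥ c * P n) :=
  stmt6_general σ P ΔT hσ hσ0 hP hΔ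
end

section
/- Let σ, Π: ℕ → ℝ be positive sequences with σ_n → 0, ∑ Π_n < ∞, d·Π_n ≤ σ_n² for a constant d > 0 and all n. Let x: ℕ → ℝ with ∑ x_n² < ∞. For each δ > 0 let ΔTilde_n(δ) = δ² (white training noise) and consider test noise Δ with Δ_n ≤ δ⁴ for all n. Define E = ∑_n [ (σ_n² δ²/(Π_n σ_n² + σ_n² δ²))² x_n² + Π_n σ_n² Δ_n/(Π_n σ_n² + σ_n² δ²)² · Π_n ]. Then sup over admissible Δ of E tends to 0 as δ → 0. -/
/-!
Since `σ_n² ≥ d Π_n > 0`, the `n`-th error term simplifies to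
`(δ²/(Π_n + δ²))² x_n² + Π_n² Δ_n / (σ_n² (Π_n + δ²)²)`. It is increasing in `Δ_n`, so the worst
admissible test noise is `Δ_n = δ⁴`. For that choice every term tends to `0` with `δ`, and it is
dominated, uniformly in `δ`, by `x_n² + Π_n / d`, which is summable; dominated convergence for
series (Tannery's theorem) finishes the proof.
-/

open Filter Topology

/-- The `n`-th summand of the error, with `σ = σ_n`, `p = Π_n`, `x = x_n` and test noise `D = Δ_n`. -/
noncomputable def postErrorTerm (σ p x δ D : ℝ) : ℝ :=
  (σ ^ 2 * δ ^ 2 / (p * σ ^ 2 + σ ^ 2 * δ ^ 2)) ^ 2 * x ^ 2 +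
    p * σ ^ 2 * D / (p * σ ^ 2 + σ ^ 2 * δ ^ 2) ^ 2 * p

section
variable {σ p x δ D D' d : ℝ}

lemma postErrorTerm_eq (hσ : σ ≠ 0) (hp : 0 < p) :
    postErrorTerm σ p x δ D =
      (δ ^ 2 / (p + δ ^ 2)) ^ 2 * x ^ 2 + p ^ 2 * D / (σ ^ 2 * (p + δ ^ 2) ^ 2) := by
  have : p + δ ^ 2 ≠ 0 := by positivity
  unfold postErrorTerm
  field_simp

lemma postErrorTerm_nonneg (hp : 0 ≤ p) (hD : 0 ≤ D) : 0 ≤ postErrorTerm σ p x δ D := by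
  unfold postErrorTerm; positivity

lemma postErrorTerm_mono (hp : 0 ≤ p) (hD : D ≤ D') :
    postErrorTerm σ p x δ D ≤ postErrorTerm σ p x δ D' := by
  unfold postErrorTerm; gcongr

lemma postErrorTerm_le (hd : 0 < d) (hp : 0 < p) (hdata : d * p ≤ σ ^ 2) :
    postErrorTerm σ p x δ (δ ^ 4) ≤ x ^ 2 + p / d := by
  have hσ2 : 0 < σ ^ 2 := (mul_pos hd hp).trans_le hdata
  rw [postErrorTerm_eq (by rintro rfl; simp at hσ2) hp]
  have hbias : (δ ^ 2 / (p + δ ^ 2)) ^ 2 ≤ 1 :=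
    pow_le_one₀ (by positivity) (div_le_one_of_le₀ (by linarith) (by positivity))
  have hnoise : p ^ 2 * δ ^ 4 / (σ ^ 2 * (p + δ ^ 2) ^ 2) ≤ p / d := by
    rw [div_le_div_iff₀ (by positivity) hd]
    have hδ : δ ^ 4 ≤ (p + δ ^ 2) ^ 2 := by nlinarith
    calc p ^ 2 * δ ^ 4 * d = p * δ ^ 4 * (d * p) := by ring
      _ ≤ p * (p + δ ^ 2) ^ 2 * σ ^ 2 := by gcongr
      _ = p * (σ ^ 2 * (p + δ ^ 2) ^ 2) := by ring
  nlinarith [sq_nonneg x]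

lemma tendsto_postErrorTerm (hσ : σ ≠ 0) (hp : 0 < p) :
    Tendsto (fun δ => postErrorTerm σ p x δ (δ ^ 4)) (𝓝 0) (𝓝 0) := by
  simp_rw [postErrorTerm_eq hσ hp]
  have : Continuous fun δ : ℝ =>
      (δ ^ 2 / (p + δ ^ 2)) ^ 2 * x ^ 2 + p ^ 2 * δ ^ 4 / (σ ^ 2 * (p + δ ^ 2) ^ 2) := by
    fun_prop (disch := intro; positivity)
  simpa using this.tendsto 0
end

lemma tendsto_tsum_postErrorTerm {σ P x : ℕ → ℝ} {d : ℝ} (hd : 0 < d) (hP : ∀ n, 0 < P n)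
    (hPsum : Summable P) (hdata : ∀ n, d * P n ≤ σ n ^ 2) (hx : Summable fun n => x n ^ 2) :
    Tendsto (fun δ => ∑' n, postErrorTerm (σ n) (P n) (x n) δ (δ ^ 4)) (𝓝 0) (𝓝 0) := by
  have hσ : ∀ n, σ n ≠ 0 := fun n h => by nlinarith [mul_pos hd (hP n), hdata n, h]
  simpa using tendsto_tsum_of_dominated_convergence (hx.add (hPsum.div_const d))
    (fun n => tendsto_postErrorTerm (hσ n) (hP n)) (Eventually.of_forall fun δ n => by
      rw [Real.norm_of_nonneg (postErrorTerm_nonneg (hP n).le (by positivity))]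
      exact postErrorTerm_le hd (hP n) (hdata n))

theorem stmt8_general (σ P x : ℕ → ℝ) (d : ℝ) (hd : 0 < d)
    (hP : ∀ n, 0 < P n) (hPsum : Summable P)
    (hdata : ∀ n, d * P n ≤ σ n ^ 2)
    (hx : Summable fun n => x n ^ 2) :
    ∀ ε > (0 : ℝ), ∃ δ₀ > (0 : ℝ), ∀ δ : ℝ, 0 < δ → δ ≤ δ₀ →
      ∀ Δ : ℕ → ℝ, (∀ n, 0 ≤ Δ n) → (∀ n, Δ n ≤ δ ^ 4) →
        (∑' n, ((σ n ^ 2 * δ ^ 2 / (P n * σ n ^ 2 + σ n ^ 2 * δ ^ 2)) ^ 2 * x n ^ 2 +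
            P n * σ n ^ 2 * Δ n / (P n * σ n ^ 2 + σ n ^ 2 * δ ^ 2) ^ 2 * P n)) ≤ ε := by
  intro ε hε
  obtain ⟨r, hr, hsmall⟩ := Metric.eventually_nhds_iff.mp
    ((tendsto_tsum_postErrorTerm hd hP hPsum hdata hx).eventually (ge_mem_nhds hε))
  refine ⟨r / 2, half_pos hr, fun δ hδ hδr Δ hΔ0 hΔ => ?_⟩
  have hmajor : Summable fun n => postErrorTerm (σ n) (P n) (x n) δ (δ ^ 4) :=
    (hx.add (hPsum.div_const d)).of_nonneg_of_le
      (fun n => postErrorTerm_nonneg (hP n).le (by positivity))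
      (fun n => postErrorTerm_le hd (hP n) (hdata n))
  have hmono n := postErrorTerm_mono (σ := σ n) (x := x n) (δ := δ) (hP n).le (hΔ n)
  have hsum : Summable fun n => postErrorTerm (σ n) (P n) (x n) δ (Δ n) :=
    hmajor.of_nonneg_of_le (fun n => postErrorTerm_nonneg (hP n).le (hΔ0 n)) hmono
  calc ∑' n, postErrorTerm (σ n) (P n) (x n) δ (Δ n)
      ≤ ∑' n, postErrorTerm (σ n) (P n) (x n) δ (δ ^ 4) := hsum.tsum_le_tsum hmono hmajor
    _ ≤ ε := hsmall (by rw [Real.dist_0_eq_abs, abs_of_pos hδ]; linarith)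

/-- Convergence of the post-processing approach with white training noise of level `δ`,
tested on noise of level at most `δ ^ 2`, under the data assumption `d P_n ≤ σ_n²`. -/
theorem stmt8 (σ P x : ℕ → ℝ) (d : ℝ) (hd : 0 < d)
    (hσ : ∀ n, 0 < σ n) (hσ0 : Filter.Tendsto σ Filter.atTop (nhds 0))
    (hP : ∀ n, 0 < P n) (hPsum : Summable P)
    (hdata : ∀ n, d * P n ≤ σ n ^ 2)
    (hx : Summable fun n => x n ^ 2) :
    ∀ ε > (0 : ℝ), ∃ δ₀ > (0 : ℝ), ∀ δ : ℝ, 0 < δ → δ ≤ δ₀ →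
      ∀ Δ : ℕ → ℝ, (∀ n, 0 ≤ Δ n) → (∀ n, Δ n ≤ δ ^ 4) →
        (∑' n, ((σ n ^ 2 * δ ^ 2 / (P n * σ n ^ 2 + σ n ^ 2 * δ ^ 2)) ^ 2 * x n ^ 2 +
            P n * σ n ^ 2 * Δ n / (P n * σ n ^ 2 + σ n ^ 2 * δ ^ 2) ^ 2 * P n)) ≤ ε :=
  stmt8_general σ P x d hd hP hPsum hdata hx
end

section
/- Let σ, Π, Δ: ℕ → ℝ be positive sequences with σ_n → 0 and sup_n Δ_n < ∞, and let β > 0. Then the sequence g_n = σ_n / (σ_n² + (3/(8β))·Δ_n/(3σ_n²Π_n + Δ_n)) is bounded if and only if there exist c > 0 and N such that Δ_n ≥ c·σ_n³·Π_n for all n ≥ N. -/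
/-!
Write `λ = (3/(8β)) Δ/(3σ²Π + Δ)`, so that `g = σ/(σ² + λ)`. Since `σ → 0`, the term `σ²` is
negligible against `σ`, and `g` stays bounded exactly when `λ ≳ σ`, i.e. `Δ ≳ σ (3σ²Π + Δ)`.
This forces `Δ ≳ σ³Π`; conversely `Δ ≥ cσ³Π` gives `3σ²Π + Δ ≤ (3/(cσ) + 1) Δ`, hence `λ ≳ σ`.
-/

open Filter

-- The paper's `λ_n^{adv,β}` and `g_n` at a single index, with `σ_n = s`, `Π_n = p`, `Δ_n = d`.
noncomputable def advLambda (β s p d : ℝ) : ℝ := 3 / (8 * β) * (d / (3 * s ^ 2 * p + d))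

noncomputable def advFilterCoeff (β s p d : ℝ) : ℝ := s / (s ^ 2 + advLambda β s p d)

lemma div_sq_add_le_of_le_mul {s l K : ℝ} (hs : 0 < s) (hl : 0 < l) (h : s ≤ K * l) :
    s / (s ^ 2 + l) ≤ K := by
  have hK : 0 ≤ K := by nlinarith
  rw [div_le_iff₀ (by positivity)]
  nlinarith [mul_nonneg hK (sq_nonneg s)]

lemma le_mul_of_div_sq_add_le {s l C : ℝ} (hs : 0 < s) (hl : 0 ≤ l)
    (h : s / (s ^ 2 + l) ≤ C) (hsC : 2 * C * s ≤ 1) : s ≤ 2 * C * l := by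
  rw [div_le_iff₀ (by positivity)] at h
  nlinarith [mul_le_mul_of_nonneg_left hsC hs.le]

section advLambda

variable {β s p d : ℝ}

lemma advLambda_pos (hβ : 0 < β) (hs : 0 < s) (hp : 0 < p) (hd : 0 < d) :
    0 < advLambda β s p d := by
  unfold advLambda; positivity

lemma le_mul_advLambda_of_mul_cube_le {c S : ℝ} (hβ : 0 < β) (hs : 0 < s) (hp : 0 < p)
    (hc : 0 < c) (hsS : s ≤ S) (hd : c * s ^ 3 * p ≤ d) :
    s ≤ 8 * β * (3 + c * S) / (3 * c) * advLambda β s p d := by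
  have hd0 : 0 < d := lt_of_lt_of_le (by positivity) hd
  have hS : 0 < S := hs.trans_le hsS
  have hE : 0 < 3 * s ^ 2 * p + d := by positivity
  -- `c s · 3s²p ≤ 3d` and `c s · d ≤ c S d`
  have hratio : c * s / (3 + c * S) ≤ d / (3 * s ^ 2 * p + d) := by
    rw [div_le_div_iff₀ (by positivity) hE]
    nlinarith [mul_le_mul_of_nonneg_right hsS (mul_pos hc hd0).le]
  calc s = 8 * β * (3 + c * S) / (3 * c) * (3 / (8 * β)) * (c * s / (3 + c * S)) := by
        field_simp
    _ ≤ 8 * β * (3 + c * S) / (3 * c) * (3 / (8 * β)) * (d / (3 * s ^ 2 * p + d)) := by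
        gcongr
    _ = 8 * β * (3 + c * S) / (3 * c) * advLambda β s p d := by
        rw [advLambda]; ring

lemma mul_cube_le_of_le_mul_advLambda {K : ℝ} (hβ : 0 < β) (hs : 0 < s) (hp : 0 < p)
    (hd : 0 < d) (h : s ≤ K * advLambda β s p d) : 8 * β / K * s ^ 3 * p ≤ d := by
  have hE : 0 < 3 * s ^ 2 * p + d := by positivity
  have hK : 0 < K := pos_of_mul_pos_left (hs.trans_le h) (advLambda_pos hβ hs hp hd).le
  have key : 8 * β * s * (3 * s ^ 2 * p + d) ≤ 3 * K * d := by
    have h' := mul_le_mul_of_nonneg_left h (by positivity : (0 : ℝ) ≤ 8 * β)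
    rw [advLambda, mul_div_assoc'] at h'
    calc 8 * β * s * (3 * s ^ 2 * p + d) ≤ 8 * β * (K * (3 / (8 * β) * d / (3 * s ^ 2 * p + d)))
          * (3 * s ^ 2 * p + d) := by gcongr
      _ = 3 * K * d := by field_simp
  rw [div_mul_eq_mul_div, div_mul_eq_mul_div, div_le_iff₀ hK]
  nlinarith [mul_pos (mul_pos hβ hs) hd]

end advLambda

section advFilterCoeff

variable {β s p d : ℝ}

lemma advFilterCoeff_pos (hβ : 0 < β) (hs : 0 < s) (hp : 0 < p) (hd : 0 < d) :
    0 < advFilterCoeff β s p d := by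
  have := advLambda_pos hβ hs hp hd
  unfold advFilterCoeff; positivity

lemma mul_cube_le_of_advFilterCoeff_le {C : ℝ} (hβ : 0 < β) (hs : 0 < s) (hp : 0 < p)
    (hd : 0 < d) (h : advFilterCoeff β s p d ≤ C) (hsC : 2 * C * s ≤ 1) :
    4 * β / C * s ^ 3 * p ≤ d := by
  have hlam := le_mul_of_div_sq_add_le hs (advLambda_pos hβ hs hp hd).le h hsC
  convert mul_cube_le_of_le_mul_advLambda hβ hs hp hd hlam using 3
  ring

lemma advFilterCoeff_le_of_mul_cube_le {c S : ℝ} (hβ : 0 < β) (hs : 0 < s) (hp : 0 < p)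
    (hc : 0 < c) (hsS : s ≤ S) (hd : c * s ^ 3 * p ≤ d) :
    advFilterCoeff β s p d ≤ 8 * β * (3 + c * S) / (3 * c) :=
  have hd0 : 0 < d := lt_of_lt_of_le (by positivity) hd
  div_sq_add_le_of_le_mul hs (advLambda_pos hβ hs hp hd0)
    (le_mul_advLambda_of_mul_cube_le hβ hs hp hc hsS hd)

end advFilterCoeff

theorem stmt12_general (σ P Δ : ℕ → ℝ) (β : ℝ) (hβ : 0 < β)
    (hσ : ∀ n, 0 < σ n) (hσ0 : Filter.Tendsto σ Filter.atTop (nhds 0))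
    (hP : ∀ n, 0 < P n) (hΔ : ∀ n, 0 < Δ n) :
    (∃ C : ℝ, ∀ n,
        σ n / (σ n ^ 2 + 3 / (8 * β) * (Δ n / (3 * σ n ^ 2 * P n + Δ n))) ≤ C) ↔
      (∃ c : ℝ, 0 < c ∧ ∃ N : ℕ, ∀ n ≥ N, Δ n ≥ c * σ n ^ 3 * P n) := by
  constructor
  · rintro ⟨C, hC⟩
    have hC0 : 0 < C := (advFilterCoeff_pos hβ (hσ 0) (hP 0) (hΔ 0)).trans_le (hC 0)
    obtain ⟨N, hN⟩ := eventually_atTop.mp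
      (hσ0.eventually (ge_mem_nhds (by positivity : (0 : ℝ) < 1 / (2 * C))))
    refine ⟨4 * β / C, by positivity, N, fun n hn => ?_⟩
    have hsC : 2 * C * σ n ≤ 1 := by
      have := hN n hn
      rwa [le_div_iff₀ (by positivity), mul_comm] at this
    exact mul_cube_le_of_advFilterCoeff_le hβ (hσ n) (hP n) (hΔ n) (hC n) hsC
  · rintro ⟨c, hc, N, hN⟩
    obtain ⟨S, hS⟩ := hσ0.bddAbove_range
    have hbdd : IsBoundedUnder (· ≤ ·) atTop fun n => advFilterCoeff β (σ n) (P n) (Δ n) :=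
      isBoundedUnder_of_eventually_le <| eventually_atTop.mpr ⟨N, fun n hn =>
        advFilterCoeff_le_of_mul_cube_le hβ (hσ n) (hP n) hc (hS ⟨n, rfl⟩) (hN n hn)⟩
    obtain ⟨C, hC⟩ := hbdd.bddAbove_range
    exact ⟨C, fun n => hC ⟨n, rfl⟩⟩

/-- Continuity criterion for the adversarial regularizer with relaxed gradient
penalty: the filter coefficients are bounded iff `Δ n ≥ c σ n ^ 3 P n` eventually. -/
theorem stmt12 (σ P Δ : ℕ → ℝ) (β : ℝ) (hβ : 0 < β)
    (hσ : ∀ n, 0 < σ n) (hσ0 : Filter.Tendsto σ Filter.atTop (nhds 0))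
    (hP : ∀ n, 0 < P n) (hΔ : ∀ n, 0 < Δ n)
    (hΔb : ∃ M : ℝ, ∀ n, Δ n ≤ M) :
    (∃ C : ℝ, ∀ n,
        σ n / (σ n ^ 2 + 3 / (8 * β) * (Δ n / (3 * σ n ^ 2 * P n + Δ n))) ≤ C) ↔
      (∃ c : ℝ, 0 < c ∧ ∃ N : ℕ, ∀ n ≥ N, Δ n ≥ c * σ n ^ 3 * P n) :=
  stmt12_general σ P Δ β hβ hσ hσ0 hP hΔ
end

section
/- Let σ, Π: ℕ → ℝ be positive with ∑ σ_n² < ∞, σ_n and Π_n bounded, ∑ Π_n < ∞, and x: ℕ → ℝ with ∑ x_n² < ∞; let β > 0. For δ ∈ (0,1), white training noise Δ^μ_n = δ², and test noise Δ with Δ_n ≤ δ⁴, define g_n = σ_n/(σ_n² + (3/(8β))·δ²/(3σ_n²Π_n + δ²)) and E = ∑_n (1 − σ_n g_n)² x_n² + g_n² Δ_n. Then sup over admissible Δ of E tends to 0 as δ → 0. -/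
/-!
Write `c = 3/(8β)` and `q = δ²/(3σ²P + δ²)`. Then `1 - σ g = c q/(σ² + c q) ∈ [0, 1]` and
`g δ² ≤ σ (3σ²P + δ²)/c`, so for `δ ≤ 1` each summand is dominated, uniformly in `δ` and in the
admissible test noise, by `x² + (3M + 1)²/c² · σ²` with `M` a bound for `σ²P`; this is summable.
The error grows with the test noise, so the worst case is `Δ = δ⁴`, and each of its summands
tends to `0` as `δ → 0` because `g → 1/σ`. Tannery's theorem finishes the proof.
-/

open Filter Topology

namespace GradientPenalty

/-- The filter `g_n` of the paper, with `c = 3/(8β)`. -/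
noncomputable def filterCoeff (c s p δ : ℝ) : ℝ :=
  s / (s ^ 2 + c * (δ ^ 2 / (3 * s ^ 2 * p + δ ^ 2)))

/-- The `n`-th summand of the error `E`, with `d = Δ_n`. -/
noncomputable def errorTerm (c s p x δ d : ℝ) : ℝ :=
  (1 - s * filterCoeff c s p δ) ^ 2 * x ^ 2 + filterCoeff c s p δ ^ 2 * d

section Coefficient

variable {c s p : ℝ}

lemma one_sub_mul_filterCoeff (hs : 0 < s) (hc : 0 ≤ c) (hp : 0 ≤ p) (δ : ℝ) :
    1 - s * filterCoeff c s p δ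
      = c * (δ ^ 2 / (3 * s ^ 2 * p + δ ^ 2)) / (s ^ 2 + c * (δ ^ 2 / (3 * s ^ 2 * p + δ ^ 2))) := by
  have : 0 < s ^ 2 + c * (δ ^ 2 / (3 * s ^ 2 * p + δ ^ 2)) := by positivity
  rw [filterCoeff, eq_div_iff this.ne']
  field_simp
  ring

lemma sq_one_sub_mul_filterCoeff_le_one (hs : 0 < s) (hc : 0 ≤ c) (hp : 0 ≤ p) (δ : ℝ) :
    (1 - s * filterCoeff c s p δ) ^ 2 ≤ 1 := by
  rw [sq_le_one_iff_abs_le_one, one_sub_mul_filterCoeff hs hc hp,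
    abs_of_nonneg (by positivity), div_le_one (by positivity)]
  nlinarith [sq_nonneg s]

lemma filterCoeff_mul_sq_le (hs : 0 < s) (hc : 0 < c) (hp : 0 ≤ p) {δ : ℝ} (hδ : 0 < δ) :
    filterCoeff c s p δ * δ ^ 2 ≤ s * (3 * s ^ 2 * p + δ ^ 2) / c := by
  calc filterCoeff c s p δ * δ ^ 2
      ≤ s / (c * (δ ^ 2 / (3 * s ^ 2 * p + δ ^ 2))) * δ ^ 2 := by
        unfold filterCoeff
        gcongr
        nlinarith [sq_nonneg s]
    _ = s * (3 * s ^ 2 * p + δ ^ 2) / c := by field_simp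

end Coefficient

section Error

variable {c s p x : ℝ}

lemma errorTerm_nonneg (c s p x δ : ℝ) {d : ℝ} (hd : 0 ≤ d) : 0 ≤ errorTerm c s p x δ d := by
  unfold errorTerm; positivity

lemma errorTerm_mono (c s p x δ : ℝ) {d d' : ℝ} (h : d ≤ d') :
    errorTerm c s p x δ d ≤ errorTerm c s p x δ d' := by
  unfold errorTerm; gcongr

lemma errorTerm_white_le (hs : 0 < s) (hc : 0 < c) (hp : 0 ≤ p) {δ : ℝ} (hδ : 0 < δ)
    (hδ1 : δ ≤ 1) :
    errorTerm c s p x δ (δ ^ 4) ≤ x ^ 2 + s ^ 2 * (3 * s ^ 2 * p + 1) ^ 2 / c ^ 2 := by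
  have hsignal : (1 - s * filterCoeff c s p δ) ^ 2 * x ^ 2 ≤ x ^ 2 :=
    mul_le_of_le_one_left (sq_nonneg x) (sq_one_sub_mul_filterCoeff_le_one hs hc.le hp δ)
  have hnoise : filterCoeff c s p δ ^ 2 * δ ^ 4 ≤ (s * (3 * s ^ 2 * p + 1) / c) ^ 2 := by
    have hg : 0 ≤ filterCoeff c s p δ * δ ^ 2 := by unfold filterCoeff; positivity
    have hδ2 : δ ^ 2 ≤ 1 := pow_le_one₀ hδ.le hδ1
    calc filterCoeff c s p δ ^ 2 * δ ^ 4 = (filterCoeff c s p δ * δ ^ 2) ^ 2 := by ring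
      _ ≤ (s * (3 * s ^ 2 * p + δ ^ 2) / c) ^ 2 := by
        gcongr; exact filterCoeff_mul_sq_le hs hc hp hδ
      _ ≤ (s * (3 * s ^ 2 * p + 1) / c) ^ 2 := by gcongr
  rw [errorTerm]
  linarith [show (s * (3 * s ^ 2 * p + 1) / c) ^ 2 = s ^ 2 * (3 * s ^ 2 * p + 1) ^ 2 / c ^ 2 by ring]

lemma tendsto_errorTerm_white (hs : 0 < s) (hp : 0 < p) :
    Tendsto (fun δ => errorTerm c s p x δ (δ ^ 4)) (𝓝 0) (𝓝 0) := by
  have hcont : ContinuousAt (fun δ => errorTerm c s p x δ (δ ^ 4)) 0 := by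
    have hinner : (3 * s ^ 2 * p + (0:ℝ) ^ 2) ≠ 0 := by positivity
    have hdenom : s ^ 2 + c * ((0:ℝ) ^ 2 / (3 * s ^ 2 * p + 0 ^ 2)) ≠ 0 := by simp; positivity
    unfold errorTerm filterCoeff
    fun_prop (disch := assumption)
  convert hcont.tendsto using 2
  have : s * (s / s ^ 2) = 1 := by field_simp
  simp [errorTerm, filterCoeff, this]

end Error

section Series

variable {c : ℝ} {σ P x : ℕ → ℝ}

lemma errorTerm_white_le_uniform (hc : 0 < c) (hσ : ∀ n, 0 < σ n) (hP : ∀ n, 0 < P n)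
    {M : ℝ} (hM : ∀ n, σ n ^ 2 * P n ≤ M) {δ : ℝ} (hδ : 0 < δ) (hδ1 : δ ≤ 1) (n : ℕ) :
    errorTerm c (σ n) (P n) (x n) δ (δ ^ 4) ≤ x n ^ 2 + (3 * M + 1) ^ 2 / c ^ 2 * σ n ^ 2 := by
  have hσP : (3 * σ n ^ 2 * P n + 1) ^ 2 ≤ (3 * M + 1) ^ 2 :=
    pow_le_pow_left₀ (by have := hP n; positivity) (by linarith [hM n]) 2
  calc errorTerm c (σ n) (P n) (x n) δ (δ ^ 4)
      ≤ x n ^ 2 + σ n ^ 2 * (3 * σ n ^ 2 * P n + 1) ^ 2 / c ^ 2 :=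
        errorTerm_white_le (hσ n) hc (hP n).le hδ hδ1
    _ ≤ x n ^ 2 + σ n ^ 2 * (3 * M + 1) ^ 2 / c ^ 2 := by gcongr
    _ = x n ^ 2 + (3 * M + 1) ^ 2 / c ^ 2 * σ n ^ 2 := by ring

variable (hc : 0 < c) (hσ : ∀ n, 0 < σ n) (hP : ∀ n, 0 < P n) {M : ℝ}
  (hM : ∀ n, σ n ^ 2 * P n ≤ M) (hσsum : Summable fun n => σ n ^ 2)
  (hx : Summable fun n => x n ^ 2)
include hc hσ hP hM hσsum hx

lemma summable_errorTerm_white {δ : ℝ} (hδ : 0 < δ) (hδ1 : δ ≤ 1) :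
    Summable fun n => errorTerm c (σ n) (P n) (x n) δ (δ ^ 4) :=
  (hx.add (hσsum.mul_left _)).of_nonneg_of_le
    (fun n => errorTerm_nonneg _ _ _ _ _ (by positivity))
    (errorTerm_white_le_uniform hc hσ hP hM hδ hδ1)

lemma tsum_errorTerm_le_tsum_white {δ : ℝ} (hδ : 0 < δ) (hδ1 : δ ≤ 1) {Δ : ℕ → ℝ}
    (hΔ : ∀ n, 0 ≤ Δ n) (hΔδ : ∀ n, Δ n ≤ δ ^ 4) :
    ∑' n, errorTerm c (σ n) (P n) (x n) δ (Δ n)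
      ≤ ∑' n, errorTerm c (σ n) (P n) (x n) δ (δ ^ 4) := by
  have hwhite := summable_errorTerm_white hc hσ hP hM hσsum hx hδ hδ1
  have hle n := errorTerm_mono c (σ n) (P n) (x n) δ (hΔδ n)
  exact (hwhite.of_nonneg_of_le (fun n => errorTerm_nonneg _ _ _ _ _ (hΔ n)) hle).tsum_le_tsum
    hle hwhite

theorem tendsto_tsum_errorTerm_white :
    Tendsto (fun δ => ∑' n, errorTerm c (σ n) (P n) (x n) δ (δ ^ 4)) (𝓝[>] 0) (𝓝 0) := by
  have hbound : ∀ᶠ δ in 𝓝[>] 0, ∀ n,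
      ‖errorTerm c (σ n) (P n) (x n) δ (δ ^ 4)‖ ≤ x n ^ 2 + (3 * M + 1) ^ 2 / c ^ 2 * σ n ^ 2 := by
    filter_upwards [Ioo_mem_nhdsGT one_pos] with δ hδ n
    rw [Real.norm_of_nonneg (errorTerm_nonneg _ _ _ _ _ (by positivity))]
    exact errorTerm_white_le_uniform hc hσ hP hM hδ.1 hδ.2.le n
  simpa only [tsum_zero] using tendsto_tsum_of_dominated_convergence (hx.add (hσsum.mul_left _))
    (fun n => (tendsto_errorTerm_white (hσ n) (hP n)).mono_left nhdsWithin_le_nhds) hbound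

end Series

end GradientPenalty

open GradientPenalty in
theorem stmt15_general (σ P x : ℕ → ℝ) (β : ℝ) (hβ : 0 < β)
    (hσ : ∀ n, 0 < σ n) (hσsum : Summable fun n => σ n ^ 2)
    (hσb : ∃ M : ℝ, ∀ n, σ n ≤ M)
    (hP : ∀ n, 0 < P n) (hPb : ∃ M : ℝ, ∀ n, P n ≤ M)
    (hx : Summable fun n => x n ^ 2) :
    ∀ ε > (0 : ℝ), ∃ δ₀ > (0 : ℝ), ∀ δ : ℝ, 0 < δ → δ < 1 → δ ≤ δ₀ →
      ∀ Δ : ℕ → ℝ, (∀ n, 0 ≤ Δ n) → (∀ n, Δ n ≤ δ ^ 4) →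
        (∑' n,
          ((1 - σ n * (σ n / (σ n ^ 2 +
              3 / (8 * β) * (δ ^ 2 / (3 * σ n ^ 2 * P n + δ ^ 2))))) ^ 2 * x n ^ 2 +
            (σ n / (σ n ^ 2 +
              3 / (8 * β) * (δ ^ 2 / (3 * σ n ^ 2 * P n + δ ^ 2)))) ^ 2 * Δ n)) ≤ ε := by
  intro ε hε
  obtain ⟨Mσ, hMσ⟩ := hσb
  obtain ⟨MP, hMP⟩ := hPb
  have hσP n : σ n ^ 2 * P n ≤ Mσ ^ 2 * MP :=
    mul_le_mul (pow_le_pow_left₀ (hσ n).le (hMσ n) 2) (hMP n) (hP n).le (sq_nonneg Mσ)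
  have hc : 0 < 3 / (8 * β) := by positivity
  obtain ⟨δ₀, hδ₀, hsmall⟩ := mem_nhdsGT_iff_exists_Ioc_subset.1
    (tendsto_tsum_errorTerm_white hc hσ hP hσP hσsum hx (Iic_mem_nhds hε))
  refine ⟨δ₀, hδ₀, fun δ hδ hδ1 hδδ₀ Δ hΔ hΔδ => ?_⟩
  exact (tsum_errorTerm_le_tsum_white hc hσ hP hσP hσsum hx hδ hδ1.le hΔ hΔδ).trans
    (hsmall ⟨hδ, hδδ₀⟩)

/-- Convergence of the adversarial regularizer with gradient penalty trained on white
noise of level `δ`, tested on noise of level at most `δ²`. -/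
theorem stmt15 (σ P x : ℕ → ℝ) (β : ℝ) (hβ : 0 < β)
    (hσ : ∀ n, 0 < σ n) (hσsum : Summable fun n => σ n ^ 2)
    (hσb : ∃ M : ℝ, ∀ n, σ n ≤ M)
    (hP : ∀ n, 0 < P n) (hPb : ∃ M : ℝ, ∀ n, P n ≤ M) (hPsum : Summable P)
    (hx : Summable fun n => x n ^ 2) :
    ∀ ε > (0 : ℝ), ∃ δ₀ > (0 : ℝ), ∀ δ : ℝ, 0 < δ → δ < 1 → δ ≤ δ₀ →
      ∀ Δ : ℕ → ℝ, (∀ n, 0 ≤ Δ n) → (∀ n, Δ n ≤ δ ^ 4) →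
        (∑' n,
          ((1 - σ n * (σ n / (σ n ^ 2 +
              3 / (8 * β) * (δ ^ 2 / (3 * σ n ^ 2 * P n + δ ^ 2))))) ^ 2 * x n ^ 2 +
            (σ n / (σ n ^ 2 +
              3 / (8 * β) * (δ ^ 2 / (3 * σ n ^ 2 * P n + δ ^ 2)))) ^ 2 * Δ n)) ≤ ε :=
  stmt15_general σ P x β hβ hσ hσsum hσb hP hPb hx
end
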